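/- Double integral lower bound in product coordinates: let n > r ≥ 1 be integers, s > 0 and δ > 0. There exists a constant C > 0, depending only on δ, n, r and s, such that for all y, y' in the open ball B^{n−r}_δ(0) ⊂ ℝ^{n−r} with y ≠ y', ∫_{B^r_{6δ}(0)} ∫_{B^r_{6δ}(0)} ( |x−x'|² + |y−y'|² )^{−(n+2s)/2} dx' dx ≥ C |y−y'|^{−(n−r+2s)}, where B^r_{6δ}(0) ⊂ ℝ^r is the open ball of radius 6δ centered at the origin. -/

import Mathlib

/-!
For `x` in the ball of radius `3δ` and `t = |y - y'| < 2δ`, the ball `B(x, t)` lies in the ball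
of radius `6δ`, and on it the integrand is at least `(2t²)^{-(n+2s)/2}`. Restricting the outer
integral to the ball of radius `3δ` and the inner one to `B(x, t)` therefore gives the lower bound
`|B_{3δ}| |B_1| t^r (2t²)^{-(n+2s)/2}`, which is a constant times `t^{-(n-r+2s)}`.
-/

open MeasureTheory Measure Metric

section

variable {X : Type*} [MeasurableSpace X] {μ : Measure X} {f : X → ℝ} {s S : Set X} {c : ℝ}

theorem mul_measureReal_le_setIntegral_of_subset (hs : MeasurableSet s) (hμs : μ s ≠ ⊤)
    (hsS : s ⊆ S) (hf : IntegrableOn f S μ) (hf0 : 0 ≤ f) (hc : ∀ x ∈ s, c ≤ f x) :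
    c * μ.real s ≤ ∫ x in S, f x ∂μ :=
  (setIntegral_ge_of_const_le_real hs hμs hc (hf.mono_set hsS)).trans
    (setIntegral_mono_set hf (ae_of_all _ hf0) hsS.eventuallyLE)

theorem integrable_rpow_sq_add_sq [IsFiniteMeasure μ] {g : X → ℝ} (hg : Measurable g)
    {t p : ℝ} (ht : t ≠ 0) (hp : p ≤ 0) :
    Integrable (fun z => (g z ^ 2 + t ^ 2) ^ p) μ := by
  refine .of_bound (by fun_prop : Measurable _).aestronglyMeasurable ((t ^ 2) ^ p) (ae_of_all _ fun z => ?_)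
  rw [Real.norm_of_nonneg (by positivity)]
  exact Real.rpow_le_rpow_of_nonpos (by positivity) (by nlinarith [sq_nonneg (g z)]) hp

end

section

variable {E : Type*} [NormedAddCommGroup E] [MeasurableSpace E] [BorelSpace E]

theorem addHaar_real_ball_of_pos [NormedSpace ℝ E] [FiniteDimensional ℝ E] (μ : Measure E)
    [IsAddHaarMeasure μ] (x : E) {r : ℝ} (hr : 0 < r) :
    μ.real (ball x r) = r ^ Module.finrank ℝ E * μ.real (ball 0 1) := by
  rw [measureReal_def, addHaar_ball_of_pos μ x hr, ENNReal.toReal_mul,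
    ENNReal.toReal_ofReal (by positivity), measureReal_def]

theorem le_integral_ball_integral_ball_rpow [ProperSpace E] (μ : Measure E) [IsAddHaarMeasure μ]
    {R t p : ℝ} (ht : 0 < t) (htR : t ≤ R) (hp : p ≤ 0) :
    (2 * t ^ 2) ^ p * μ.real (ball 0 t) * μ.real (ball 0 R) ≤
      ∫ x in ball (0 : E) (2 * R), ∫ x' in ball (0 : E) (2 * R),
        (‖x - x'‖ ^ 2 + t ^ 2) ^ p ∂μ ∂μ := by
  set B := ball (0 : E) (2 * R)
  have : IsFiniteMeasure (μ.restrict B) := isFiniteMeasure_restrict.2 measure_ball_lt_top.ne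
  have hinner : ∀ x ∈ ball (0 : E) R,
      (2 * t ^ 2) ^ p * μ.real (ball 0 t) ≤ ∫ x' in B, (‖x - x'‖ ^ 2 + t ^ 2) ^ p ∂μ := by
    intro x hx
    rw [← addHaar_real_ball_center μ x]
    refine mul_measureReal_le_setIntegral_of_subset measurableSet_ball measure_ball_lt_top.ne
      (ball_subset_ball' ?_) (integrable_rpow_sq_add_sq (by fun_prop) ht.ne' hp)
      (fun x' => by positivity) fun x' hx' => ?_
    · rw [mem_ball] at hx
      linarith
    · rw [mem_ball, dist_comm, dist_eq_norm] at hx'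
      exact Real.rpow_le_rpow_of_nonpos (by positivity) (by nlinarith [norm_nonneg (x - x')]) hp
  have hprod : Integrable (fun z : E × E => (‖z.1 - z.2‖ ^ 2 + t ^ 2) ^ p)
      ((μ.restrict B).prod (μ.restrict B)) :=
    integrable_rpow_sq_add_sq (by fun_prop) ht.ne' hp
  exact mul_measureReal_le_setIntegral_of_subset measurableSet_ball measure_ball_lt_top.ne
    (ball_subset_ball (by linarith)) hprod.integral_prod_left
    (fun x => integral_nonneg fun x' => by positivity) hinner

end

theorem stmt_16_general (n r : ℕ) (s δ : ℝ) (hs : 0 < s) (hδ : 0 < δ) :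
    ∃ C > 0, ∀ y y' : EuclideanSpace ℝ (Fin (n - r)),
      y ∈ ball (0 : EuclideanSpace ℝ (Fin (n - r))) δ →
      y' ∈ ball (0 : EuclideanSpace ℝ (Fin (n - r))) δ → y ≠ y' →
        C * ‖y - y'‖ ^ (-((n : ℝ) - r + 2 * s)) ≤
          ∫ x in ball (0 : EuclideanSpace ℝ (Fin r)) (6 * δ),
            ∫ x' in ball (0 : EuclideanSpace ℝ (Fin r)) (6 * δ),
              (‖x - x'‖ ^ 2 + ‖y - y'‖ ^ 2) ^ (-((n : ℝ) + 2 * s) / 2) := by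
  set p : ℝ := -((n : ℝ) + 2 * s) / 2
  have hp : p ≤ 0 := by
    have : (0 : ℝ) < n + 2 * s := by positivity
    simp only [p]
    linarith
  set v : ℝ := volume.real (ball (0 : EuclideanSpace ℝ (Fin r)) 1)
  have hv : 0 < v := ENNReal.toReal_pos (measure_ball_pos _ _ one_pos).ne' measure_ball_lt_top.ne
  refine ⟨2 ^ p * (3 * δ) ^ r * v ^ 2, by positivity, fun y y' hy hy' hne => ?_⟩
  set t := ‖y - y'‖
  have ht : 0 < t := norm_pos_iff.2 (sub_ne_zero.2 hne)
  have ht2 : t < 2 * δ := by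
    rw [mem_ball_zero_iff] at hy hy'
    linarith [norm_sub_le y y']
  have hbound := le_integral_ball_integral_ball_rpow
    (volume : Measure (EuclideanSpace ℝ (Fin r))) ht (R := 3 * δ) (by linarith) hp
  rw [← mul_assoc, show (2 : ℝ) * 3 = 6 by norm_num, addHaar_real_ball_of_pos _ _ ht,
    addHaar_real_ball_of_pos _ _ (r := 3 * δ) (by positivity), finrank_euclideanSpace_fin]
    at hbound
  refine le_of_eq_of_le ?_ hbound
  have hpow : (2 * t ^ 2) ^ p * t ^ r = 2 ^ p * t ^ (-((n : ℝ) - r + 2 * s)) := by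
    rw [Real.mul_rpow two_pos.le (by positivity), ← Real.rpow_natCast t 2, ← Real.rpow_mul ht.le,
      mul_assoc, ← Real.rpow_natCast t r, ← Real.rpow_add ht]
    congr 2
    simp only [p]
    push_cast
    ring
  linear_combination (-((3 * δ) ^ r * v ^ 2)) * hpow

/-- **Double integral lower bound in product coordinates.** -/
theorem stmt_16 (n r : ℕ) (hr : 1 ≤ r) (hrn : r < n) (s δ : ℝ) (hs : 0 < s) (hδ : 0 < δ) :
    ∃ C > 0, ∀ y y' : EuclideanSpace ℝ (Fin (n - r)),
      y ∈ ball (0 : EuclideanSpace ℝ (Fin (n - r))) δ →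
      y' ∈ ball (0 : EuclideanSpace ℝ (Fin (n - r))) δ → y ≠ y' →
        C * ‖y - y'‖ ^ (-((n : ℝ) - r + 2 * s)) ≤
          ∫ x in ball (0 : EuclideanSpace ℝ (Fin r)) (6 * δ),
            ∫ x' in ball (0 : EuclideanSpace ℝ (Fin r)) (6 * δ),
              (‖x - x'‖ ^ 2 + ‖y - y'‖ ^ 2) ^ (-((n : ℝ) + 2 * s) / 2) :=
  stmt_16_general n r s δ hs hδ
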